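/- Let p be an odd prime and n ≥ 1 with p^n ≡ 3 (mod 4) and χ(5) = 1, and let f(X) = X^{p^n−2} be the inverse function on F_{p^n}. Then the (−1)-differential spectrum of f satisfies ₋₁ω_0 = (p^n+1)/2, ₋₁ω_1 = 1, ₋₁ω_2 = (p^n−7)/2, ₋₁ω_3 = 2, and ₋₁ω_i = 0 for all i ≥ 4. -/

import Mathlib

open Finset

/-- The `c`-DDT entry of `f` at `(a, b)`:
the number of `x` with `f (x + a) - c * f x = b`. -/
def cDDT {F : Type*} [Field F] [Fintype F] [DecidableEq F]
    (f : F → F) (c a b : F) : ℕ :=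
  (Finset.univ.filter (fun x : F => f (x + a) - c * f x = b)).card

/-- The `c`-differential uniformity of `f`: the maximum of the `c`-DDT entries
over all `a, b`, where `a ≠ 0` is required when `c = 1`. -/
def cDU {F : Type*} [Field F] [Fintype F] [DecidableEq F]
    (f : F → F) (c : F) : ℕ :=
  (Finset.univ.filter (fun ab : F × F => c = 1 → ab.1 ≠ 0)).sup
    (fun ab => cDDT f c ab.1 ab.2)

/-- The classical differential uniformity of `f`. -/
def DU {F : Type*} [Field F] [Fintype F] [DecidableEq F] (f : F → F) : ℕ :=
  cDU f 1

/-- The BCT entry of `f` at `(a, b)`: the number of pairs `(x, y)` with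
`f x - f y = b` and `f (x + a) - f (y + a) = b`. -/
def BCT {F : Type*} [Field F] [Fintype F] [DecidableEq F]
    (f : F → F) (a b : F) : ℕ :=
  (Finset.univ.filter (fun xy : F × F =>
    f xy.1 - f xy.2 = b ∧ f (xy.1 + a) - f (xy.2 + a) = b)).card

/-- The boomerang uniformity of `f`: the maximum of the BCT entries over all
nonzero `a, b`. -/
def BU {F : Type*} [Field F] [Fintype F] [DecidableEq F] (f : F → F) : ℕ :=
  (Finset.univ.filter (fun ab : F × F => ab.1 ≠ 0 ∧ ab.2 ≠ 0)).sup
    (fun ab => BCT f ab.1 ab.2)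

/-- The quadratic character: `χ 0 = 0`, `χ α = 1` if `α` is a nonzero square,
and `χ α = -1` otherwise. -/
noncomputable def chi {F : Type*} [Field F] (α : F) : ℤ :=
  letI := Classical.dec (α = 0)
  letI := Classical.dec (IsSquare α)
  if α = 0 then 0 else if IsSquare α then 1 else -1

/-- The `c`-differential spectrum entry `ω_i` of a power function:
the number of `b` with `cΔ_f(1, b) = i`. -/
def omegaSpec {F : Type*} [Field F] [Fintype F] [DecidableEq F]
    (f : F → F) (c : F) (i : ℕ) : ℕ :=
  (Finset.univ.filter (fun b : F => cDDT f c 1 b = i)).card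

/-- The boomerang spectrum entry `v_i` of a power function:
the number of nonzero `b` with `B_f(1, b) = i`. -/
def vSpec {F : Type*} [Field F] [Fintype F] [DecidableEq F]
    (f : F → F) (i : ℕ) : ℕ :=
  (Finset.univ.filter (fun b : F => b ≠ 0 ∧ BCT f 1 b = i)).card

/-!
For `x ∉ {0, -1}` the equation `(x + 1)⁻¹ + x⁻¹ = b` is the quadratic
`b x² + (b - 2) x - 1 = 0`, of discriminant `b² + 4`; this never vanishes since `-1` is a
nonsquare, while `x = 0` and `x = -1` are solutions exactly for `b = 1` and `b = -1`.
So the `(-1)`-DDT entry at `b` is `1` for `b = 0` (where the equation is linear), `3` for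
`b = ±1` (the discriminant is then the square `5`), and `0` or `2` otherwise. This gives
`ω₁ = 1`, `ω₃ = 2` and `ωᵢ = 0` for `i ≥ 4`; since every `x` lies over exactly one `b`,
`∑ ωᵢ = q` and `∑ i ωᵢ = q` (with `q = p ^ n`), which determine `ω₀` and `ω₂`.
-/

section

variable {F : Type*} [Field F]

theorem two_ne_zero_of_not_isSquare_neg_one (hm1 : ¬IsSquare (-1 : F)) : (2 : F) ≠ 0 :=
  fun h => hm1 ⟨1, by linear_combination -h⟩

theorem sq_add_four_ne_zero_of_not_isSquare_neg_one (hm1 : ¬IsSquare (-1 : F)) (b : F) :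
    b ^ 2 + 4 ≠ 0 := by
  have h2 := two_ne_zero_of_not_isSquare_neg_one hm1
  exact fun h => hm1 ⟨b / 2, by field_simp; linear_combination -h⟩

theorem isSquare_of_chi_eq_one {α : F} (h : chi α = 1) : IsSquare α := by
  unfold chi at h
  split_ifs at h with h0 hsq
  · exact h0 ▸ IsSquare.zero
  · exact hsq

theorem inv_add_one_add_inv_eq_iff {b x : F} :
    (x + 1)⁻¹ + x⁻¹ = b ↔
      b * (x * x) + (b - 2) * x - 1 = 0 ∨ (x = 0 ∧ b = 1) ∨ (x = -1 ∧ b = -1) := by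
  rcases eq_or_ne x 0 with rfl | hx
  · simp [eq_comm]
  rcases eq_or_ne x (-1) with rfl | hx1
  · norm_num [eq_comm]
  have hx1' : x + 1 ≠ 0 := fun h => hx1 (eq_neg_of_add_eq_zero_left h)
  simp only [hx, hx1, false_and, or_false]
  constructor
  · intro h
    field_simp at h
    linear_combination -h
  · intro h
    field_simp
    linear_combination -h

theorem pow_card_sub_two_eq_inv [Fintype F] (hq : 2 < Fintype.card F) (x : F) :
    x ^ (Fintype.card F - 2) = x⁻¹ := by
  rcases eq_or_ne x 0 with rfl | hx
  · rw [inv_zero, zero_pow (by omega)]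
  · refine eq_inv_of_mul_eq_one_left ?_
    rw [← pow_succ, show Fintype.card F - 2 + 1 = Fintype.card F - 1 by omega]
    exact FiniteField.pow_card_sub_one_eq_one x hx

variable [Fintype F] [DecidableEq F]

theorem card_filter_sq_eq [NeZero (2 : F)] {d : F} (hd : d ≠ 0) :
    #{y : F | y ^ 2 = d} = if IsSquare d then 2 else 0 := by
  split_ifs with hsq
  · obtain ⟨r, rfl⟩ := hsq
    have hr0 : r ≠ 0 := right_ne_zero_of_mul hd
    have hr : r ≠ -r := fun h =>
      hr0 (mul_left_cancel₀ two_ne_zero (by linear_combination h : (2 : F) * r = 2 * 0))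
    have hroots : ({y : F | y ^ 2 = r * r} : Finset F) = {r, -r} := by
      ext y
      simp [← sq, sq_eq_sq_iff_eq_or_eq_neg]
    rw [hroots, card_pair hr]
  · rw [card_eq_zero, filter_eq_empty_iff]
    exact fun y _ hy => hsq ⟨y, by rw [← hy, sq]⟩

theorem card_filter_quadratic_eq_zero [NeZero (2 : F)] {a b c : F} (ha : a ≠ 0) :
    #{x : F | a * (x * x) + b * x + c = 0} = #{s : F | s ^ 2 = discrim a b c} := by
  have h2a : 2 * a ≠ 0 := mul_ne_zero two_ne_zero ha
  refine card_nbij' (fun x => 2 * a * x + b) (fun s => (s - b) / (2 * a)) ?_ ?_ ?_ ?_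
  · intro x hx
    simp only [coe_filter, mem_univ, true_and, Set.mem_ofPred_eq] at hx ⊢
    exact ((quadratic_eq_zero_iff_discrim_eq_sq ha x).mp hx).symm
  · intro s hs
    simp only [coe_filter, mem_univ, true_and, Set.mem_ofPred_eq] at hs ⊢
    rw [quadratic_eq_zero_iff_discrim_eq_sq ha, ← hs]
    field_simp
    ring
  all_goals
    intro _ _
    field_simp
    ring

theorem card_filter_inv_add_one_add_inv_eq (b : F) :
    #{x : F | (x + 1)⁻¹ + x⁻¹ = b} =
      #{x : F | b * (x * x) + (b - 2) * x - 1 = 0} + (if b = 1 then 1 else 0) +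
        (if b = -1 then 1 else 0) := by
  simp_rw [inv_add_one_add_inv_eq_iff, filter_or]
  rw [card_union_of_disjoint, card_union_of_disjoint]
  · have hpt : ∀ (a : F) (p : Prop) [Decidable p],
        #{x : F | x = a ∧ p} = if p then 1 else 0 := by
      intro a p _
      split_ifs <;> simp [*, filter_eq']
    rw [hpt, hpt, add_assoc]
  · exact disjoint_filter.mpr fun x _ h0 h1 => by simp_all
  · refine disjoint_union_right.mpr ⟨?_, ?_⟩ <;>
      exact disjoint_filter.mpr fun x _ hQ ⟨hx, hb⟩ => by subst hx hb; norm_num at hQ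

theorem sum_cDDT (f : F → F) (c a : F) : ∑ b, cDDT f c a b = Fintype.card F :=
  (card_eq_sum_card_fiberwise fun x _ => mem_univ (f (x + a) - c * f x)).symm

section Spectrum

variable {f : F → F} {c : F} {N : ℕ}

theorem sum_omegaSpec (hN : ∀ b, cDDT f c 1 b ≤ N) :
    ∑ i ∈ range (N + 1), omegaSpec f c i = Fintype.card F :=
  (card_eq_sum_card_fiberwise fun b _ => mem_range_succ_iff.mpr (hN b)).symm

theorem sum_mul_omegaSpec (hN : ∀ b, cDDT f c 1 b ≤ N) :
    ∑ i ∈ range (N + 1), i * omegaSpec f c i = Fintype.card F :=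
  calc ∑ i ∈ range (N + 1), i * omegaSpec f c i
      = ∑ i ∈ range (N + 1), ∑ b with cDDT f c 1 b = i, cDDT f c 1 b := by
        refine sum_congr rfl fun i _ => ?_
        rw [sum_congr rfl fun b hb => (mem_filter.mp hb).2, sum_const, smul_eq_mul, mul_comm]
        rfl
    _ = ∑ b, cDDT f c 1 b :=
        sum_fiberwise_of_maps_to (fun b _ => mem_range_succ_iff.mpr (hN b)) _
    _ = Fintype.card F := sum_cDDT f c 1

theorem omegaSpec_eq_zero_of_lt (hN : ∀ b, cDDT f c 1 b ≤ N) {i : ℕ} (hi : N < i) :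
    omegaSpec f c i = 0 :=
  card_eq_zero.mpr <| filter_eq_empty_iff.mpr fun b _ hb => by have := hN b; omega

end Spectrum

theorem cDDT_inv_neg_one (hm1 : ¬IsSquare (-1 : F)) (h5 : IsSquare (5 : F)) (b : F) :
    cDDT (fun x : F => x⁻¹) (-1) 1 b =
      if b = 0 then 1 else if b = 1 ∨ b = -1 then 3 else if IsSquare (b ^ 2 + 4) then 2 else 0 := by
  have h2 := two_ne_zero_of_not_isSquare_neg_one hm1
  have : NeZero (2 : F) := ⟨h2⟩
  simp only [cDDT, neg_one_mul, sub_neg_eq_add]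
  rw [card_filter_inv_add_one_add_inv_eq]
  rcases eq_or_ne b 0 with rfl | hb
  · have hlin : ({x : F | 0 * (x * x) + (0 - 2) * x - 1 = 0} : Finset F) = {-2⁻¹} := by
      ext x
      simp only [mem_filter, mem_univ, true_and, mem_singleton]
      constructor
      · intro h; field_simp; linear_combination -h
      · rintro rfl; field_simp; ring
    rw [hlin, card_singleton]
    simp
  have hdisc : discrim b (b - 2) (-1) = b ^ 2 + 4 := by rw [discrim]; ring
  have hQ := card_filter_quadratic_eq_zero hb (b := b - 2) (c := -1)
  simp only [← sub_eq_add_neg, hdisc] at hQ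
  rw [hQ, card_filter_sq_eq (sq_add_four_ne_zero_of_not_isSquare_neg_one hm1 b)]
  have h11 : (1 : F) ≠ -1 := fun h => h2 (by linear_combination h)
  rcases eq_or_ne b 1 with rfl | hb1
  · norm_num [h11, h5]
  rcases eq_or_ne b (-1) with rfl | hbm1
  · norm_num [h11.symm, h5]
  simp [hb, hb1, hbm1]

theorem cDDT_inv_neg_one_le_three (hm1 : ¬IsSquare (-1 : F)) (h5 : IsSquare (5 : F)) (b : F) :
    cDDT (fun x : F => x⁻¹) (-1) 1 b ≤ 3 := by
  rw [cDDT_inv_neg_one hm1 h5]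
  split_ifs <;> omega

theorem omegaSpec_inv_neg_one_one (hm1 : ¬IsSquare (-1 : F)) (h5 : IsSquare (5 : F)) :
    omegaSpec (fun x : F => x⁻¹) (-1) 1 = 1 := by
  have hfiber : ({b : F | cDDT (fun x : F => x⁻¹) (-1) 1 b = 1} : Finset F) = {0} := by
    ext b
    simp only [mem_filter, mem_univ, true_and, mem_singleton, cDDT_inv_neg_one hm1 h5]
    split_ifs <;> simp_all
  rw [omegaSpec, hfiber, card_singleton]

theorem omegaSpec_inv_neg_one_three (hm1 : ¬IsSquare (-1 : F)) (h5 : IsSquare (5 : F)) :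
    omegaSpec (fun x : F => x⁻¹) (-1) 3 = 2 := by
  have h11 : (1 : F) ≠ -1 := fun h =>
    two_ne_zero_of_not_isSquare_neg_one hm1 (by linear_combination h)
  have hfiber : ({b : F | cDDT (fun x : F => x⁻¹) (-1) 1 b = 3} : Finset F) = {1, -1} := by
    ext b
    simp only [mem_filter, mem_univ, true_and, mem_insert, mem_singleton,
      cDDT_inv_neg_one hm1 h5]
    split_ifs <;> simp_all
  rw [omegaSpec, hfiber, card_pair h11]

end

theorem neg_one_spectrum_inverse_three_mod_four_chi_five_one_general (p n : ℕ)
    {F : Type*} [Field F] [Fintype F] [DecidableEq F]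
    (hF : Fintype.card F = p ^ n)
    (hmod : p ^ n % 4 = 3) (hchi : chi (5 : F) = 1)
    (f : F → F) (hf : ∀ x : F, f x = x ^ (p ^ n - 2)) :
    omegaSpec f (-1) 0 = (p ^ n + 1) / 2 ∧ omegaSpec f (-1) 1 = 1 ∧
    omegaSpec f (-1) 2 = (p ^ n - 7) / 2 ∧ omegaSpec f (-1) 3 = 2 ∧
    ∀ i : ℕ, 4 ≤ i → omegaSpec f (-1) i = 0 := by
  rw [← hF] at hmod hf ⊢
  have hm1 : ¬IsSquare (-1 : F) := fun h => FiniteField.isSquare_neg_one_iff.mp h hmod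
  have h5 : IsSquare (5 : F) := isSquare_of_chi_eq_one hchi
  obtain rfl : f = (·⁻¹) := funext fun x => (hf x).trans (pow_card_sub_two_eq_inv (by omega) x)
  have hle := cDDT_inv_neg_one_le_three hm1 h5
  have hsum := sum_omegaSpec hle
  have hsum_mul := sum_mul_omegaSpec hle
  simp only [sum_range_succ, sum_range_zero] at hsum hsum_mul
  have h1 := omegaSpec_inv_neg_one_one hm1 h5
  have h3 := omegaSpec_inv_neg_one_three hm1 h5
  exact ⟨by omega, h1, by omega, h3, fun i hi => omegaSpec_eq_zero_of_lt hle hi⟩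

theorem neg_one_spectrum_inverse_three_mod_four_chi_five_one (p n : ℕ) (hp : p.Prime) (hpodd : Odd p) (hn : 1 ≤ n)
    {F : Type*} [Field F] [Fintype F] [DecidableEq F]
    (hF : Fintype.card F = p ^ n)
    (hmod : p ^ n % 4 = 3) (hchi : chi (5 : F) = 1)
    (f : F → F) (hf : ∀ x : F, f x = x ^ (p ^ n - 2)) :
    omegaSpec f (-1) 0 = (p ^ n + 1) / 2 ∧ omegaSpec f (-1) 1 = 1 ∧
    omegaSpec f (-1) 2 = (p ^ n - 7) / 2 ∧ omegaSpec f (-1) 3 = 2 ∧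
    ∀ i : ℕ, 4 ≤ i → omegaSpec f (-1) i = 0 :=
  neg_one_spectrum_inverse_three_mod_four_chi_five_one_general p n hF hmod hchi f hf
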